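/- arXiv:1304.5530 — 6 statements merged into one kernel-verified Lean document; each statement's English description precedes it below -/
import Mathlib

section
/- Let (Ω,𝓕,ℙ) be a probability space, fix x₀ ∈ ℝ^N, and let {x_k}_{k≥1} be random vectors in ℝ^N. Let φ : ℝ^N → ℝ be nonnegative and measurable, set ξ_k = φ(x_k) (so ξ₀ = φ(x₀) is a constant), assume each ξ_k is integrable and that ξ_{k+1} ≤ ξ_k almost surely for every k ≥ 0. Let α, β ≥ 0 and c₁ > 0 satisfy σ := √(α² + 4β/c₁) < 1, and suppose that for every k ≥ 0 the conditional expectation satisfies E[ξ_{k+1} | σ(x_k)] ≤ (1+α)ξ_k − ξ_k²/c₁ + β almost surely. Let ρ ∈ (0,1) and let ε satisfy (c₁/2)(α + √(α² + 4β/(c₁ρ))) < ε < min{(1+α)c₁, ξ₀}, and set u = (c₁/2)(α + σ). If K is a natural number with K ≥ c₁/(ε − αc₁) · log((ε − βc₁/(ε − αc₁))/(ερ − βc₁/(ε − αc₁))) + m + 2, where m = min{(1/σ)·log((ξ₀ − u)/(ε − u)), c₁/(ε − u) − c₁/(ξ₀ − u)} when σ > 0 and m = c₁/(ε − u) − c₁/(ξ₀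 − u) when σ = 0, then ℙ(ξ_K ≤ ε) ≥ 1 − ρ. -/
/-!
Write `ξ_k = φ(x_k)`. Taking expectations in the one-step inequality and using Jensen,
`(E ξ_k)² ≤ E ξ_k²`, the means `a_k = E ξ_k` satisfy `a_{k+1} ≤ (1+α) a_k − a_k²/c₁ + β`.
Since `u` is the positive fixed point of this quadratic map, `d_k = a_k − u` satisfies
`d_{k+1} ≤ d_k (1 − σ − d_k/c₁)`: it contracts geometrically at rate `1 − σ`, and `c₁/d_k`
grows by at least one per step, so after `m` steps the mean is below `ε`.
From then on the tail means `b_k = E[ξ_k; ξ_k > ε]` satisfy the linear recursion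
`b_{k+1} ≤ (1 + α − ε/c₁) b_k + β`, because `{ξ_{k+1} > ε} ⊆ {ξ_k > ε}` almost surely, the
latter set is `σ(x_k)`-measurable, and `ξ_k² ≥ ε ξ_k` on it. Hence `b_K ≤ ερ`, and Markov's inequality on
`{ξ_K > ε}` gives the claim.
-/

open MeasureTheory Real

theorem one_sub_pow_mul_le_of_log_div_le {r D E : ℝ} (hr : r ≤ 1) (hD : 0 < D) (hE : 0 < E)
    {n : ℕ} (hn : log (D / E) ≤ r * n) : (1 - r) ^ n * D ≤ E := by
  have hpow : (1 - r) ^ n ≤ exp (-(r * n)) :=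
    calc (1 - r) ^ n ≤ exp (-r) ^ n := pow_le_pow_left₀ (by linarith) (one_sub_le_exp_neg r) n
      _ = exp (-(r * n)) := by rw [← exp_nat_mul]; ring_nf
  have hDE : D ≤ E * exp (r * n) := by
    rw [← div_le_iff₀' hE]; exact (log_le_iff_le_exp (div_pos hD hE)).mp hn
  calc (1 - r) ^ n * D ≤ exp (-(r * n)) * (E * exp (r * n)) := by gcongr
    _ = E := by rw [mul_left_comm, ← exp_add, neg_add_cancel, exp_zero, mul_one]

theorem mul_log_div_nonneg {a x y : ℝ} (ha : 0 ≤ a) (hy : 0 < y) (hyx : y ≤ x) :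
    0 ≤ a * log (x / y) :=
  mul_nonneg ha (log_nonneg ((one_le_div hy).2 hyx))

theorem sub_le_pow_mul_sub {q s : ℝ} {b : ℕ → ℝ} (hq : 0 ≤ q)
    (hb : ∀ k, b (k + 1) - s ≤ q * (b k - s)) (n : ℕ) : b n - s ≤ q ^ n * (b 0 - s) := by
  induction n with
  | zero => simp
  | succ n ih =>
    calc b (n + 1) - s ≤ q * (b n - s) := hb n
      _ ≤ q * (q ^ n * (b 0 - s)) := by gcongr
      _ = q ^ (n + 1) * (b 0 - s) := by ring

theorem le_of_log_div_le_of_le_one_sub_mul_add {r s B T : ℝ} {b : ℕ → ℝ} (hr : r ≤ 1)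
    (hb : ∀ k, b (k + 1) ≤ (1 - r) * b k + r * s) (hb0 : b 0 ≤ B) (hsT : s < T) (hTB : T ≤ B)
    {n : ℕ} (hn : log ((B - s) / (T - s)) ≤ r * n) : b n ≤ T := by
  have hq : 0 ≤ (1 - r) ^ n := pow_nonneg (by linarith) n
  have hgeom := sub_le_pow_mul_sub (q := 1 - r) (b := b) (s := s) (by linarith)
    (fun k => by linarith [hb k, show (1 - r) * (b k - s) = (1 - r) * b k + r * s - s by ring]) n
  have hlog := one_sub_pow_mul_le_of_log_div_le hr (by linarith) (by linarith) hn
  nlinarith [mul_le_mul_of_nonneg_left (by linarith : b 0 - s ≤ B - s) hq]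

def QuadraticDecay (c σ : ℝ) (d : ℕ → ℝ) : Prop :=
  ∀ k, d (k + 1) ≤ d k * (1 - σ - d k / c)

theorem div_add_one_le_div_of_le_sub_sq {c x y : ℝ} (hc : 0 < c) (hx : 0 < x) (hy : 0 < y)
    (h : y ≤ x - x ^ 2 / c) : c / x + 1 ≤ c / y := by
  rw [div_add_one hx.ne', div_le_div_iff₀ hx hy]
  have hxc : x ^ 2 / c * c = x ^ 2 := div_mul_cancel₀ _ hc.ne'
  nlinarith [mul_le_mul_of_nonneg_left h (by positivity : 0 ≤ c + x),
    div_nonneg (sq_nonneg x) hc.le]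

namespace QuadraticDecay

variable {c σ : ℝ} {d : ℕ → ℝ}

theorem nonpos_of_le (hc : 0 < c) (hσ : σ ≤ 1)
    (hd : QuadraticDecay c σ d) {k n : ℕ} (hk : d k ≤ 0) (hkn : k ≤ n) :
    d n ≤ 0 := by
  induction n, hkn using Nat.le_induction with
  | base => exact hk
  | succ n _ ih =>
    have : d n / c ≤ 0 := div_nonpos_of_nonpos_of_nonneg ih hc.le
    exact (hd n).trans (mul_nonpos_of_nonpos_of_nonneg ih (by linarith))

theorem le_one_sub_pow_mul (hc : 0 < c) (hσ : σ ≤ 1)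
    (hd : QuadraticDecay c σ d) {D : ℝ} (hD : 0 ≤ D) (hd0 : d 0 ≤ D)
    (n : ℕ) : d n ≤ (1 - σ) ^ n * D := by
  have hσ' : 0 ≤ 1 - σ := by linarith
  induction n with
  | zero => simpa using hd0
  | succ n ih =>
    rcases le_or_gt (d n) 0 with hn | hn
    · exact (hd.nonpos_of_le hc hσ hn n.le_succ).trans (by positivity)
    · calc d (n + 1) ≤ d n * (1 - σ - d n / c) := hd n
        _ ≤ d n * (1 - σ) := mul_le_mul_of_nonneg_left (by linarith [div_pos hn hc]) hn.le
        _ ≤ (1 - σ) ^ n * D * (1 - σ) := by gcongr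
        _ = (1 - σ) ^ (n + 1) * D := by ring

theorem div_add_le_div (hc : 0 < c) (hσ0 : 0 ≤ σ) (hσ1 : σ ≤ 1)
    (hd : QuadraticDecay c σ d) {n : ℕ} (hn : 0 < d n) :
    c / d 0 + n ≤ c / d n := by
  induction n with
  | zero => simp
  | succ n ih =>
    have hpos : 0 < d n :=
      lt_of_not_ge fun h => hn.not_ge (hd.nonpos_of_le hc hσ1 h n.le_succ)
    have hstep : d (n + 1) ≤ d n - d n ^ 2 / c := by
      have := hd n
      have : d n * (1 - σ - d n / c) = d n - σ * d n - d n ^ 2 / c := by ring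
      nlinarith [mul_nonneg hσ0 hpos.le]
    push_cast
    linarith [ih hpos, div_add_one_le_div_of_le_sub_sq hc hpos hn hstep]

theorem le_of_div_sub_div_le (hc : 0 < c) (hσ0 : 0 ≤ σ) (hσ1 : σ ≤ 1)
    (hd : QuadraticDecay c σ d) {D e : ℝ} (he : 0 < e) (hd0 : d 0 ≤ D)
    {n : ℕ} (hn : c / e - c / D ≤ n) : d n ≤ e := by
  by_contra! hne
  have hdn : 0 < d n := he.trans hne
  have hd0pos : 0 < d 0 :=
    lt_of_not_ge fun h => hdn.not_ge (hd.nonpos_of_le hc hσ1 h n.zero_le)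
  have := hd.div_add_le_div hc hσ0 hσ1 hdn
  have := div_le_div_of_nonneg_left hc.le hd0pos hd0
  have := div_lt_div_of_pos_left hc he hne
  linarith

theorem le_of_ite_le (hc : 0 < c) (hσ0 : 0 ≤ σ) (hσ1 : σ ≤ 1)
    (hd : QuadraticDecay c σ d) {D e : ℝ} (he : 0 < e) (hD : 0 < D)
    (hd0 : d 0 ≤ D) {n : ℕ}
    (hn : (if σ = 0 then c / e - c / D else min (1 / σ * log (D / e)) (c / e - c / D)) ≤ n) :
    d n ≤ e := by
  split_ifs at hn with hσ
  · exact hd.le_of_div_sub_div_le hc hσ0 hσ1 he hd0 hn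
  rcases min_le_iff.mp hn with hlog | hsub
  · have hσpos : 0 < σ := lt_of_le_of_ne hσ0 (Ne.symm hσ)
    rw [one_div_mul_eq_div, div_le_iff₀' hσpos] at hlog
    exact (hd.le_one_sub_pow_mul hc hσ1 hD.le hd0 n).trans
      (one_sub_pow_mul_le_of_log_div_le hσ1 hD he hlog)
  · exact hd.le_of_div_sub_div_le hc hσ0 hσ1 he hd0 hsub

end QuadraticDecay

theorem quadratic_map_sub_fixedPoint {α β c σ u : ℝ} (hc : c ≠ 0)
    (hσ : σ ^ 2 = α ^ 2 + 4 * β / c) (hu : u = c / 2 * (α + σ)) (a : ℝ) :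
    (1 + α) * a - a ^ 2 / c + β - u = (a - u) * (1 - σ - (a - u) / c) := by
  subst hu
  field_simp
  field_simp at hσ
  linear_combination (-c) * hσ

theorem mul_lt_mul_sub_of_half_mul_add_sqrt_lt {α γ c ε : ℝ} (hγ : 0 ≤ γ) (hc : 0 < c)
    (h : c / 2 * (α + √(α ^ 2 + 4 * γ / c)) < ε) : γ * c < ε * (ε - α * c) := by
  have hs := sq_sqrt (by positivity : 0 ≤ α ^ 2 + 4 * γ / c)
  set s := √(α ^ 2 + 4 * γ / c)
  have hs0 : 0 ≤ c * s := mul_nonneg hc.le (sqrt_nonneg _)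
  have hcs : (c * s) ^ 2 = c ^ 2 * α ^ 2 + 4 * γ * c := by
    rw [mul_pow, hs]; field_simp
  nlinarith

theorem lt_and_div_lt_of_half_mul_add_sqrt_lt {α β c ε ρ : ℝ} (hα : 0 ≤ α) (hβ : 0 ≤ β)
    (hc : 0 < c) (hρ : 0 < ρ) (h : c / 2 * (α + √(α ^ 2 + 4 * β / (c * ρ))) < ε) :
    α * c < ε ∧ β * c / (ε - α * c) < ε * ρ := by
  have hε : 0 < ε := lt_of_le_of_lt (by positivity) h
  have hβρ : β / ρ * c < ε * (ε - α * c) :=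
    mul_lt_mul_sub_of_half_mul_add_sqrt_lt (by positivity) hc
      (by rwa [mul_div_assoc', div_div, mul_comm ρ])
  have hεα : α * c < ε := by
    by_contra! hle
    nlinarith [mul_nonneg (div_nonneg hβ hρ.le) hc.le]
  refine ⟨hεα, (div_lt_iff₀ (by linarith)).2 ?_⟩
  rw [div_mul_eq_mul_div, div_lt_iff₀ hρ] at hβρ
  linarith

section OneStep

variable {Ω : Type*} {m m0 : MeasurableSpace Ω} {μ : Measure Ω} {ξ ξ' : Ω → ℝ} {α β c : ℝ}

theorem sq_integral_le_integral_sq [IsProbabilityMeasure μ] (hξ : Integrable ξ μ)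
    (hξ2 : Integrable (fun ω => ξ ω ^ 2) μ) :
    (∫ ω, ξ ω ∂μ) ^ 2 ≤ ∫ ω, ξ ω ^ 2 ∂μ := by
  have := ProbabilityTheory.variance_nonneg ξ μ
  rw [ProbabilityTheory.variance_eq_sub
    ((memLp_two_iff_integrable_sq hξ.aestronglyMeasurable).2 hξ2)] at this
  simpa using this

theorem integrable_sq_of_condExp_le [IsFiniteMeasure μ] (hc : 0 < c) (hξ : Integrable ξ μ)
    (hcond : ∀ᵐ ω ∂μ, μ[ξ'|m] ω ≤ (1 + α) * ξ ω - ξ ω ^ 2 / c + β) :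
    Integrable (fun ω => ξ ω ^ 2) μ := by
  have hbound : Integrable (fun ω => c * ((1 + α) * ξ ω + β - μ[ξ'|m] ω)) μ :=
    (((hξ.const_mul _).add (integrable_const β)).sub integrable_condExp).const_mul c
  refine hbound.mono' (hξ.aestronglyMeasurable.pow 2) ?_
  filter_upwards [hcond] with ω h
  rw [Real.norm_of_nonneg (sq_nonneg _), ← div_le_iff₀' hc]
  linarith

theorem integral_le_of_condExp_le [IsProbabilityMeasure μ] (hm : m ≤ m0) (hc : 0 < c)
    (hξ : Integrable ξ μ)
    (hcond : ∀ᵐ ω ∂μ, μ[ξ'|m] ω ≤ (1 + α) * ξ ω - ξ ω ^ 2 / c + β) :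
    ∫ ω, ξ' ω ∂μ ≤ (1 + α) * (∫ ω, ξ ω ∂μ) - (∫ ω, ξ ω ∂μ) ^ 2 / c + β := by
  have hξ2 := integrable_sq_of_condExp_le hc hξ hcond
  have hjensen := div_le_div_of_nonneg_right (sq_integral_le_integral_sq hξ hξ2) hc.le
  have hdiff : Integrable (fun ω => (1 + α) * ξ ω - ξ ω ^ 2 / c) μ :=
    (hξ.const_mul _).sub (hξ2.div_const _)
  calc ∫ ω, ξ' ω ∂μ = ∫ ω, μ[ξ'|m] ω ∂μ := (integral_condExp hm).symm
    _ ≤ ∫ ω, ((1 + α) * ξ ω - ξ ω ^ 2 / c + β) ∂μ :=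
      integral_mono_ae integrable_condExp (hdiff.add (integrable_const β)) hcond
    _ = (1 + α) * (∫ ω, ξ ω ∂μ) - (∫ ω, ξ ω ^ 2 ∂μ) / c + β := by
      rw [integral_add hdiff (integrable_const β),
        integral_sub (hξ.const_mul _) (hξ2.div_const _), integral_const_mul, integral_div,
        integral_const, probReal_univ, one_smul]
    _ ≤ _ := by linarith

theorem setIntegral_gt_le_of_condExp_le [IsProbabilityMeasure μ] (hm : m ≤ m0) (hc : 0 < c)
    (hβ : 0 ≤ β) {ε : ℝ} (hε : 0 ≤ ε) (hξm : Measurable[m] ξ) (hξ : Integrable ξ μ)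
    (hξ' : Integrable ξ' μ) (hξ'0 : 0 ≤ᵐ[μ] ξ') (hmono : ξ' ≤ᵐ[μ] ξ)
    (hcond : ∀ᵐ ω ∂μ, μ[ξ'|m] ω ≤ (1 + α) * ξ ω - ξ ω ^ 2 / c + β) :
    ∫ ω in {ω | ε < ξ' ω}, ξ' ω ∂μ ≤ (1 + α - ε / c) * ∫ ω in {ω | ε < ξ ω}, ξ ω ∂μ + β := by
  set A := {ω | ε < ξ ω}
  have hAm : MeasurableSet[m] A := measurableSet_lt measurable_const hξm
  have hA : MeasurableSet A := hm _ hAm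
  have hlin : Integrable (fun ω => (1 + α - ε / c) * ξ ω) μ := hξ.const_mul _
  calc ∫ ω in {ω | ε < ξ' ω}, ξ' ω ∂μ ≤ ∫ ω in A, ξ' ω ∂μ := by
        refine setIntegral_mono_set hξ'.integrableOn (ae_restrict_of_ae hξ'0) ?_
        filter_upwards [hmono] with ω h
        exact fun h' => lt_of_lt_of_le h' h
    _ = ∫ ω in A, μ[ξ'|m] ω ∂μ := (setIntegral_condExp hm hξ' hAm).symm
    _ ≤ ∫ ω in A, ((1 + α - ε / c) * ξ ω + β) ∂μ := by
        refine setIntegral_mono_ae_restrict integrable_condExp.integrableOn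
          (hlin.add (integrable_const β)).integrableOn ?_
        filter_upwards [ae_restrict_of_ae hcond, ae_restrict_mem hA] with ω h hω
        have : ε * ξ ω / c ≤ ξ ω ^ 2 / c := by
          have hωA : ε < ξ ω := hω
          gcongr; nlinarith
        have : (1 + α - ε / c) * ξ ω = (1 + α) * ξ ω - ε * ξ ω / c := by ring
        linarith
    _ = (1 + α - ε / c) * (∫ ω in A, ξ ω ∂μ) + μ.real A * β := by
        rw [integral_add hlin.integrableOn (integrable_const β).integrableOn, integral_const_mul,
          setIntegral_const, smul_eq_mul]
    _ ≤ _ := by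
        have : μ.real A ≤ 1 := measureReal_le_one
        nlinarith

theorem ofReal_one_sub_le_measure_le_of_setIntegral_le [IsProbabilityMeasure μ] {ε ρ : ℝ}
    (hε : 0 < ε) (hξm : Measurable ξ) (hξ : Integrable ξ μ)
    (h : ∫ ω in {ω | ε < ξ ω}, ξ ω ∂μ ≤ ε * ρ) :
    ENNReal.ofReal (1 - ρ) ≤ μ {ω | ξ ω ≤ ε} := by
  have hA : MeasurableSet {ω | ε < ξ ω} := measurableSet_lt measurable_const hξm
  have hmarkov : μ.real {ω | ε < ξ ω} * ε ≤ ∫ ω in {ω | ε < ξ ω}, ξ ω ∂μ :=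
    setIntegral_ge_of_const_le hA (measure_ne_top μ _) (fun _ hω => hω.le) hξ.integrableOn
  have hcompl : {ω | ξ ω ≤ ε} = {ω | ε < ξ ω}ᶜ := by ext; simp
  rw [ENNReal.ofReal_le_iff_le_toReal (measure_ne_top μ _), ← measureReal_def, hcompl,
    probReal_compl_eq_one_sub hA]
  nlinarith

end OneStep

section RandomSequence

variable {Ω : Type*} {m0 : MeasurableSpace Ω} {μ : Measure Ω} [IsProbabilityMeasure μ]
  {ξ : ℕ → Ω → ℝ} {ℱ : ℕ → MeasurableSpace Ω} {α β c : ℝ}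

theorem integral_le_of_ite_le (hℱ : ∀ k, ℱ k ≤ m0) (hc : 0 < c)
    (hint : ∀ k, Integrable (ξ k) μ)
    (hcond : ∀ k, ∀ᵐ ω ∂μ, μ[ξ (k + 1)|ℱ k] ω ≤ (1 + α) * ξ k ω - ξ k ω ^ 2 / c + β)
    {σ u ε D : ℝ} (hσ0 : 0 ≤ σ) (hσ1 : σ ≤ 1) (hσ : σ ^ 2 = α ^ 2 + 4 * β / c)
    (hu : u = c / 2 * (α + σ)) (huε : u < ε) (huD : u < D) (hD : ∫ ω, ξ 0 ω ∂μ ≤ D) {n : ℕ}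
    (hn : (if σ = 0 then c / (ε - u) - c / (D - u)
      else min (1 / σ * log ((D - u) / (ε - u))) (c / (ε - u) - c / (D - u))) ≤ n) :
    ∫ ω, ξ n ω ∂μ ≤ ε := by
  have hd : QuadraticDecay c σ (fun k => ∫ ω, ξ k ω ∂μ - u) := fun k => by
    rw [← quadratic_map_sub_fixedPoint hc.ne' hσ hu]
    linarith [integral_le_of_condExp_le (hℱ k) hc (hint k) (hcond k)]
  have := hd.le_of_ite_le hc hσ0 hσ1 (sub_pos.2 huε) (sub_pos.2 huD) (by linarith) hn
  linarith

theorem setIntegral_gt_le_of_log_le (hℱ : ∀ k, ℱ k ≤ m0) (hc : 0 < c) (hβ : 0 ≤ β)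
    (hξm : ∀ k, Measurable[ℱ k] (ξ k)) (hint : ∀ k, Integrable (ξ k) μ)
    (hnonneg : ∀ k, 0 ≤ᵐ[μ] ξ k) (hmono : ∀ k, ξ (k + 1) ≤ᵐ[μ] ξ k)
    (hcond : ∀ k, ∀ᵐ ω ∂μ, μ[ξ (k + 1)|ℱ k] ω ≤ (1 + α) * ξ k ω - ξ k ω ^ 2 / c + β)
    {ε ρ : ℝ} (hε : 0 ≤ ε) (hρ : ρ ≤ 1) (hεα : α * c < ε) (hεc : ε ≤ (1 + α) * c)
    (hβρ : β * c / (ε - α * c) < ε * ρ) {n₀ j : ℕ} (hn₀ : ∫ ω, ξ n₀ ω ∂μ ≤ ε)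
    (hj : c / (ε - α * c) *
      log ((ε - β * c / (ε - α * c)) / (ε * ρ - β * c / (ε - α * c))) ≤ j) :
    ∫ ω in {ω | ε < ξ (n₀ + j) ω}, ξ (n₀ + j) ω ∂μ ≤ ε * ρ := by
  have hεα' : 0 < ε - α * c := by linarith
  have hrate : 1 - (ε - α * c) / c = 1 + α - ε / c := by field_simp; ring
  have hfix : (ε - α * c) / c * (β * c / (ε - α * c)) = β := by field_simp
  refine le_of_log_div_le_of_le_one_sub_mul_add (r := (ε - α * c) / c)
    (b := fun k => ∫ ω in {ω | ε < ξ (n₀ + k) ω}, ξ (n₀ + k) ω ∂μ)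
    ((div_le_one hc).2 (by linarith)) (fun k => ?_) ?_ hβρ (mul_le_of_le_one_right hε hρ) ?_
  · rw [hrate, hfix]
    exact setIntegral_gt_le_of_condExp_le (hℱ _) hc hβ hε (hξm _) (hint _) (hint _)
      (hnonneg _) (hmono _) (hcond (n₀ + k))
  · exact (setIntegral_le_integral (hint n₀) (hnonneg n₀)).trans hn₀
  · have := mul_le_mul_of_nonneg_left hj (div_pos hεα' hc).le
    rwa [← mul_assoc, div_mul_div_cancel₀' hεα'.ne', div_self hc.ne', one_mul] at this

end RandomSequence

/-- Theorem 1(i) of the paper: high-probability iteration complexity for a nonnegative,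
nonincreasing stochastic process satisfying the one-step inequality
`E[ξ_{k+1} | σ(x_k)] ≤ (1+α)ξ_k − ξ_k²/c₁ + β`. -/
theorem iteration_complexity_sublinear
    {N : ℕ} {Ω : Type*} [MeasurableSpace Ω] (μ : Measure Ω) [IsProbabilityMeasure μ]
    (x0 : Fin N → ℝ) (X : ℕ → Ω → Fin N → ℝ)
    (hXmeas : ∀ k, Measurable (X k)) (hX0 : ∀ ω, X 0 ω = x0)
    (φ : (Fin N → ℝ) → ℝ) (hφmeas : Measurable φ) (hφnonneg : ∀ v, 0 ≤ φ v)
    (hint : ∀ k, Integrable (fun ω => φ (X k ω)) μ)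
    (hmono : ∀ k, ∀ᵐ ω ∂μ, φ (X (k + 1) ω) ≤ φ (X k ω))
    (α β : ℝ) (hα : 0 ≤ α) (hβ : 0 ≤ β) (c₁ : ℝ) (hc₁ : 0 < c₁)
    (σ : ℝ) (hσdef : σ = Real.sqrt (α ^ 2 + 4 * β / c₁)) (hσlt : σ < 1)
    (hcond : ∀ k, ∀ᵐ ω ∂μ,
      (μ[fun ω' => φ (X (k + 1) ω') |
          MeasurableSpace.comap (X k) MeasurableSpace.pi]) ω ≤
        (1 + α) * φ (X k ω) - (φ (X k ω)) ^ 2 / c₁ + β)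
    (ρ : ℝ) (hρ : ρ ∈ Set.Ioo (0 : ℝ) 1) (ε : ℝ)
    (hεlow : c₁ / 2 * (α + Real.sqrt (α ^ 2 + 4 * β / (c₁ * ρ))) < ε)
    (hεup : ε < min ((1 + α) * c₁) (φ x0))
    (u : ℝ) (hudef : u = c₁ / 2 * (α + σ))
    (m : ℝ)
    (hmdef : m = if σ = 0 then c₁ / (ε - u) - c₁ / (φ x0 - u)
      else min (1 / σ * Real.log ((φ x0 - u) / (ε - u)))
               (c₁ / (ε - u) - c₁ / (φ x0 - u)))
    (K : ℕ)
    (hK : c₁ / (ε - α * c₁) *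
        Real.log ((ε - β * c₁ / (ε - α * c₁)) / (ε * ρ - β * c₁ / (ε - α * c₁)))
        + m + 2 ≤ K) :
    ENNReal.ofReal (1 - ρ) ≤ μ {ω | φ (X K ω) ≤ ε} := by
  obtain ⟨hρ0, hρ1⟩ := hρ
  obtain ⟨hεc, hεx0⟩ := lt_min_iff.mp hεup
  have hℱ k := (hXmeas k).comap_le
  have hσ0 : 0 ≤ σ := hσdef ▸ sqrt_nonneg _
  have hσsq : σ ^ 2 = α ^ 2 + 4 * β / c₁ := hσdef ▸ sq_sqrt (by positivity)
  have hε0 : 0 < ε := lt_of_le_of_lt (by positivity) hεlow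
  obtain ⟨hεα, hβρ⟩ := lt_and_div_lt_of_half_mul_add_sqrt_lt hα hβ hc₁ hρ0 hεlow
  have huε : u < ε := hudef ▸ hσdef ▸ lt_of_le_of_lt (by gcongr; nlinarith) hεlow
  have hm0 : 0 ≤ m := by
    have hsub : 0 ≤ c₁ / (ε - u) - c₁ / (φ x0 - u) :=
      sub_nonneg.2 (div_le_div_of_nonneg_left hc₁.le (sub_pos.2 huε) (by linarith))
    rw [hmdef]; split_ifs
    exacts [hsub, le_min (mul_log_div_nonneg (by positivity) (sub_pos.2 huε) (by linarith)) hsub]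
  have hT0 := mul_log_div_nonneg (div_pos hc₁ (sub_pos.2 hεα)).le (sub_pos.2 hβρ)
    (sub_le_sub_right (mul_le_of_le_one_right hε0.le hρ1.le) (β * c₁ / (ε - α * c₁)))
  have hmean : ∫ ω, φ (X ⌈m⌉₊ ω) ∂μ ≤ ε :=
    integral_le_of_ite_le hℱ hc₁ hint hcond hσ0 hσlt.le hσsq hudef huε (huε.trans hεx0)
      (by simp [hX0]) (hmdef ▸ Nat.le_ceil m)
  have hn₀K : ⌈m⌉₊ ≤ K := Nat.ceil_le.2 (by linarith)
  have htail := setIntegral_gt_le_of_log_le (j := K - ⌈m⌉₊) hℱ hc₁ hβ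
    (fun k => hφmeas.comp (comap_measurable (X k))) hint
    (fun k => ae_of_all _ fun ω => hφnonneg _) hmono hcond hε0.le hρ1.le hεα hεc.le hβρ hmean
    (by rw [Nat.cast_sub hn₀K]; linarith [Nat.ceil_lt_add_one hm0])
  rw [Nat.add_sub_cancel' hn₀K] at htail
  exact ofReal_one_sub_le_measure_le_of_setIntegral_le hε0 (hφmeas.comp (hXmeas K)) (hint K) htail
end

section
/- Let c₁ > 0, u ≥ 0 and 0 ≤ σ < 1, and let (θ_k)_{k≥0} be a nonincreasing sequence of real numbers with θ_k > u for all k, satisfying θ_{k+1} − u ≤ (1 − σ)(θ_k − u) − (θ_k − u)²/c₁ for all k ≥ 0. Then for every k ≥ 0: (a) 1/(θ_k − u) ≥ 1/(θ₀ − u) + k/c₁; and (b) if σ > 0, then 1/(θ_k − u) ≥ (1/(1 − σ))^k · (1/(θ₀ − u) + 1/(c₁σ)) − 1/(c₁σ). -/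
/-- Key step: from `a' ≤ s a − a²/c` with positivity, get
`1/(s a) + 1/(s² c) ≤ 1/a'`. -/
lemma shifted_recursion_key (s c a a' : ℝ) (hs : 0 < s) (hc : 0 < c)
    (ha : 0 < a) (ha' : 0 < a') (h : a' ≤ s * a - a ^ 2 / c) :
    1 / (s * a) + 1 / (s ^ 2 * c) ≤ 1 / a' := by
  have h1 : 0 < s * a - a ^ 2 / c := lt_of_lt_of_le ha' h
  have h2 : 1 / (s * a - a ^ 2 / c) ≤ 1 / a' := one_div_le_one_div_of_le ha' h
  refine le_trans ?_ h2
  rw [le_div_iff₀ h1]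
  have hid : (1 / (s * a) + 1 / (s ^ 2 * c)) * (s * a - a ^ 2 / c)
      = 1 - a ^ 2 / (s ^ 2 * c ^ 2) := by
    field_simp
    ring
  rw [hid]
  have : 0 ≤ a ^ 2 / (s ^ 2 * c ^ 2) := by positivity
  linarith

/-- Key deterministic recursion estimate: if `θ` is nonincreasing, `θ_k > u`, and
`θ_{k+1} − u ≤ (1 − σ)(θ_k − u) − (θ_k − u)²/c₁` for all `k`, then
(a) `1/(θ_k − u) ≥ 1/(θ₀ − u) + k/c₁`, and
(b) if `σ > 0`, `1/(θ_k − u) ≥ (1/(1−σ))^k (1/(θ₀ − u) + 1/(c₁σ)) − 1/(c₁σ)`. -/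
theorem shifted_recursion_estimate
    (c₁ u σ : ℝ) (hc₁ : 0 < c₁) (hu : 0 ≤ u) (hσ0 : 0 ≤ σ) (hσ1 : σ < 1)
    (θ : ℕ → ℝ) (hmono : ∀ k, θ (k + 1) ≤ θ k) (hgt : ∀ k, u < θ k)
    (hrec : ∀ k, θ (k + 1) - u ≤ (1 - σ) * (θ k - u) - (θ k - u) ^ 2 / c₁) :
    (∀ k : ℕ, 1 / (θ 0 - u) + (k : ℝ) / c₁ ≤ 1 / (θ k - u)) ∧
    (0 < σ → ∀ k : ℕ,
      (1 / (1 - σ)) ^ k * (1 / (θ 0 - u) + 1 / (c₁ * σ)) - 1 / (c₁ * σ) ≤ 1 / (θ k - u)) := by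
  have hs : 0 < 1 - σ := by linarith
  have hapos : ∀ k, 0 < θ k - u := fun k => sub_pos.mpr (hgt k)
  have key : ∀ k, 1 / ((1 - σ) * (θ k - u)) + 1 / ((1 - σ) ^ 2 * c₁)
      ≤ 1 / (θ (k + 1) - u) := fun k =>
    shifted_recursion_key (1 - σ) c₁ (θ k - u) (θ (k + 1) - u) hs hc₁
      (hapos k) (hapos (k + 1)) (hrec k)
  constructor
  · intro k
    induction k with
    | zero => simp
    | succ k ih =>
        have h1 : 1 / (θ k - u) ≤ 1 / ((1 - σ) * (θ k - u)) := by
          apply one_div_le_one_div_of_le (mul_pos hs (hapos k))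
          nlinarith [hapos k]
        have hsq : (1 - σ) ^ 2 ≤ 1 - σ := by nlinarith [mul_nonneg hσ0 hs.le]
        have h2 : 1 / c₁ ≤ 1 / ((1 - σ) ^ 2 * c₁) := by
          apply one_div_le_one_div_of_le (mul_pos (pow_pos hs 2) hc₁)
          nlinarith [mul_le_mul_of_nonneg_right hsq hc₁.le]
        have := key k
        push_cast
        have : 1 / (θ 0 - u) + (k : ℝ) / c₁ + 1 / c₁ ≤ 1 / (θ (k + 1) - u) := by
          linarith
        calc 1 / (θ 0 - u) + ((k : ℝ) + 1) / c₁
            = 1 / (θ 0 - u) + (k : ℝ) / c₁ + 1 / c₁ := by ring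
          _ ≤ _ := this
  · intro hσ k
    induction k with
    | zero => simp
    | succ k ih =>
        have hr1 : (1 : ℝ) ≤ 1 / (1 - σ) := by
          rw [le_div_iff₀ hs]; linarith
        have hrk : (1 : ℝ) ≤ (1 / (1 - σ)) ^ k := one_le_pow₀ hr1
        have hB : 0 < 1 / (θ 0 - u) + 1 / (c₁ * σ) :=
          add_pos (one_div_pos.mpr (hapos 0)) (one_div_pos.mpr (mul_pos hc₁ hσ))
        have hkey := key k
        have e1 : 1 / ((1 - σ) * (θ k - u)) = (1 / (1 - σ)) * (1 / (θ k - u)) := by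
          rw [div_mul_div_comm, one_mul]
        -- need: r^{k+1} B - 1/(c₁σ) ≤ r * (1/a k) + r²/c₁
        have step : (1 / (1 - σ)) ^ (k + 1) * (1 / (θ 0 - u) + 1 / (c₁ * σ)) - 1 / (c₁ * σ)
            ≤ (1 / (1 - σ)) * (1 / (θ k - u)) + 1 / ((1 - σ) ^ 2 * c₁) := by
          have hmul : (1 / (1 - σ)) * ((1 / (1 - σ)) ^ k * (1 / (θ 0 - u) + 1 / (c₁ * σ)))
              ≤ (1 / (1 - σ)) * (1 / (θ k - u) + 1 / (c₁ * σ)) := by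
            apply mul_le_mul_of_nonneg_left _ (one_div_nonneg.mpr hs.le)
            linarith
          have hgain : (1 / (1 - σ)) * (1 / (c₁ * σ)) - 1 / (c₁ * σ) ≤ 1 / ((1 - σ) ^ 2 * c₁) := by
            have e : (1 / (1 - σ)) * (1 / (c₁ * σ)) - 1 / (c₁ * σ) = 1 / (c₁ * (1 - σ)) := by
              field_simp
              ring
            rw [e]
            have hsq : (1 - σ) ^ 2 ≤ 1 - σ := by nlinarith [mul_nonneg hσ0 hs.le]
            apply one_div_le_one_div_of_le (mul_pos (pow_pos hs 2) hc₁)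
            nlinarith [mul_le_mul_of_nonneg_right hsq hc₁.le]
          calc (1 / (1 - σ)) ^ (k + 1) * (1 / (θ 0 - u) + 1 / (c₁ * σ)) - 1 / (c₁ * σ)
              = (1 / (1 - σ)) * ((1 / (1 - σ)) ^ k * (1 / (θ 0 - u) + 1 / (c₁ * σ)))
                - 1 / (c₁ * σ) := by ring
            _ ≤ (1 / (1 - σ)) * (1 / (θ k - u) + 1 / (c₁ * σ)) - 1 / (c₁ * σ) := by linarith
            _ = (1 / (1 - σ)) * (1 / (θ k - u))
                + ((1 / (1 - σ)) * (1 / (c₁ * σ)) - 1 / (c₁ * σ)) := by ring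
            _ ≤ _ := by linarith
        rw [e1] at hkey
        linarith
end

section
/- Let c₁ > 0, let 0 ≤ α < 1, and let θ be a real number with θ > αc₁. Then αc₁ + (1 − α)/(1/(θ − αc₁) + 1/c₁) ≤ (1 + α)/(1/θ + 1/c₁), with equality when α = 0. -/
/-- The shifted one-step bound is never worse than the direct one-step bound:
for `c₁ > 0`, `0 ≤ α < 1` and `θ > αc₁`,
`αc₁ + (1 − α)/(1/(θ − αc₁) + 1/c₁) ≤ (1 + α)/(1/θ + 1/c₁)`, with equality when `α = 0`. -/
theorem shifted_bound_le_direct_bound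
    (c₁ α θ : ℝ) (hc₁ : 0 < c₁) (hα0 : 0 ≤ α) (hα1 : α < 1) (hθ : α * c₁ < θ) :
    α * c₁ + (1 - α) / (1 / (θ - α * c₁) + 1 / c₁) ≤ (1 + α) / (1 / θ + 1 / c₁) ∧
    (α = 0 →
      α * c₁ + (1 - α) / (1 / (θ - α * c₁) + 1 / c₁) = (1 + α) / (1 / θ + 1 / c₁)) := by
  have hx : 0 < θ - α * c₁ := by linarith
  have hθ0 : 0 < θ := lt_of_le_of_lt (mul_nonneg hα0 hc₁.le) hθ
  have h1 : (0:ℝ) < 1 * c₁ + (θ - α * c₁) * 1 := by linarith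
  have h2 : (0:ℝ) < 1 * c₁ + θ * 1 := by linarith
  constructor
  · rw [div_add_div _ _ (ne_of_gt hx) (ne_of_gt hc₁), div_add_div _ _ (ne_of_gt hθ0) (ne_of_gt hc₁),
      div_div_eq_mul_div, div_div_eq_mul_div, add_div' _ _ _ (ne_of_gt h1),
      div_le_div_iff₀ h1 h2]
    nlinarith [mul_nonneg hα0 hx.le, mul_pos hθ0 hc₁, mul_nonneg (mul_nonneg hα0 hx.le) (mul_pos hθ0 hc₁).le]
  · rintro rfl; norm_num
end

section
/- For every x ∈ E, every δ = (δ_1,…,δ_n) with δ_i ≥ 0, every δ-inexact update T at x, and every index i ∈ {1,…,n}, one has F(x + U_i T_i) ≤ F(x). -/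
/-! Integrating the block Lipschitz bound on `∇ᵢ f` along the segment from `x` to `x + Uᵢ t`
gives the block descent lemma `f (x + Uᵢ t) ≤ f x + ⟪∇ᵢ f x, t⟫ + (Lᵢ / 2) ‖t‖²`. Since only the
`i`-th summand of `Ψ` changes, this says `F (x + Uᵢ t) - F x ≤ Vᵢ(x, t) - Vᵢ(x, 0)`, and an
inexact update satisfies `Vᵢ(x, Tᵢ) ≤ Vᵢ(x, 0)`. -/

open scoped RealInnerProductSpace
open MeasureTheory

noncomputable section

variable {n : ℕ} {E : Fin n → Type*} [∀ i, NormedAddCommGroup (E i)]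
  [∀ i, InnerProductSpace ℝ (E i)] [∀ i, FiniteDimensional ℝ (E i)]

/-- `U i t`: embedding of the `i`-th block into the product space `E = E₁ × ⋯ × Eₙ`
(the vector with `i`-th block equal to `t` and all other blocks zero). -/
def blockEmbed (i : Fin n) (t : E i) : PiLp 2 E :=
  (WithLp.equiv 2 (∀ j, E j)).symm (Pi.single i t)

/-- `V_i(x,t) = ⟨∇_i f(x), t⟩ + (L_i/2)‖t‖² + Ψ_i(x_i + t)`. -/
def Vi (f : PiLp 2 E → ℝ) (L : Fin n → ℝ) (Ψ : ∀ i, E i → ℝ)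
    (x : PiLp 2 E) (i : Fin n) (t : E i) : ℝ :=
  ⟪(gradient f x) i, t⟫ + L i / 2 * ‖t‖ ^ 2 + Ψ i (x i + t)

/-- `T` is a `δ`-inexact update at `x`:
`V_i(x, T_i) ≤ min{V_i(x,0), δ_i + inf_t V_i(x,t)}` for every block `i`. -/
def IsInexactUpdate (f : PiLp 2 E → ℝ) (L : Fin n → ℝ) (Ψ : ∀ i, E i → ℝ)
    (δ : Fin n → ℝ) (x T : PiLp 2 E) : Prop :=
  ∀ i, Vi f L Ψ x i (T i) ≤ min (Vi f L Ψ x i 0) (δ i + ⨅ t : E i, Vi f L Ψ x i t)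

/-- `H(x,T) = f(x) + ⟨∇f(x), T⟩ + (1/2)‖T‖_L² + Ψ(x+T)`. -/
def Hfun (f : PiLp 2 E → ℝ) (L : Fin n → ℝ) (Ψ : ∀ i, E i → ℝ) (x T : PiLp 2 E) : ℝ :=
  f x + ⟪gradient f x, T⟫ + (1/2) * ∑ i, L i * ‖T i‖ ^ 2 + ∑ i, Ψ i (x i + T i)

/-- `F = f + Ψ` where `Ψ(x) = Σ_i Ψ_i(x_i)`. -/
def Ffun (f : PiLp 2 E → ℝ) (Ψ : ∀ i, E i → ℝ) (x : PiLp 2 E) : ℝ :=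
  f x + ∑ i, Ψ i (x i)

namespace PiLp

variable {ι : Type*} [DecidableEq ι] {β : ι → Type*}

theorem single_smul [∀ i, NormedAddCommGroup (β i)] [∀ i, NormedSpace ℝ (β i)]
    (i : ι) (s : ℝ) (t : β i) : single 2 i (s • t) = s • single 2 i t := by
  rw [← toLp_single, Pi.single_smul, WithLp.toLp_smul, toLp_single]

variable [Fintype ι]

theorem inner_single_right [∀ i, NormedAddCommGroup (β i)] [∀ i, InnerProductSpace ℝ (β i)]
    (x : PiLp 2 β) (i : ι) (t : β i) : ⟪x, single 2 i t⟫ = ⟪x i, t⟫ := by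
  rw [inner_apply, Fintype.sum_eq_single i fun j hj => by
    rw [single_eq_of_ne _ hj, inner_zero_right], single_eq_same]

theorem sum_comp_add_single [∀ i, SeminormedAddCommGroup (β i)] (Ψ : ∀ i, β i → ℝ)
    (x : PiLp 2 β) (i : ι) (t : β i) :
    ∑ j, Ψ j ((x + single 2 i t) j) = ∑ j, Ψ j (x j) + (Ψ i (x i + t) - Ψ i (x i)) := by
  have hdiff : ∑ j, (Ψ j ((x + single 2 i t) j) - Ψ j (x j)) = Ψ i (x i + t) - Ψ i (x i) := by
    rw [Fintype.sum_eq_single i fun j hj => by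
      rw [add_apply, single_eq_of_ne _ hj, add_zero, sub_self], add_apply, single_eq_same]
  rw [Finset.sum_sub_distrib] at hdiff
  linarith

end PiLp

theorem le_add_deriv_add_half_of_deriv_le {φ φ' : ℝ → ℝ} {K : ℝ}
    (hφ : ∀ s, HasDerivAt φ (φ' s) s) (hφ' : ∀ s ∈ Set.Ico (0 : ℝ) 1, φ' s ≤ φ' 0 + K * s) :
    φ 1 ≤ φ 0 + φ' 0 + K / 2 := by
  have hparabola (s : ℝ) : HasDerivAt (fun s => φ 0 + φ' 0 * s + K / 2 * s ^ 2) (φ' 0 + K * s) s :=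
    ((((hasDerivAt_id' s).const_mul (φ' 0)).const_add (φ 0)).add
      ((hasDerivAt_pow 2 s).const_mul (K / 2))).congr_deriv (by norm_num; ring)
  have hfence := image_le_of_deriv_right_le_deriv_boundary
    (fun s _ => (hφ s).continuousAt.continuousWithinAt) (fun s _ => (hφ s).hasDerivWithinAt)
    (by simp) (fun s _ => (hparabola s).continuousAt.continuousWithinAt)
    (fun s _ => (hparabola s).hasDerivWithinAt) hφ' (b := 1) (Set.right_mem_Icc.2 zero_le_one)
  simpa using hfence

theorem apply_add_le_of_inner_gradient_le {F : Type*} [NormedAddCommGroup F]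
    [InnerProductSpace ℝ F] [CompleteSpace F] {f : F → ℝ} (hf : Differentiable ℝ f)
    (x v : F) {K : ℝ}
    (hgrad : ∀ s ∈ Set.Ico (0 : ℝ) 1, ⟪gradient f (x + s • v), v⟫ ≤ ⟪gradient f x, v⟫ + K * s) :
    f (x + v) ≤ f x + ⟪gradient f x, v⟫ + K / 2 := by
  have hline (s : ℝ) : HasDerivAt (fun s : ℝ => x + s • v) v s := by
    simpa using ((hasDerivAt_id s).smul_const v).const_add x
  have hφ (s : ℝ) :
      HasDerivAt (fun s : ℝ => f (x + s • v)) ⟪gradient f (x + s • v), v⟫ s := by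
    simpa only [Function.comp_def, InnerProductSpace.toDual_apply_apply] using
      (hf _).hasGradientAt.hasFDerivAt.comp_hasDerivAt s (hline s)
  simpa using le_add_deriv_add_half_of_deriv_le hφ (by simpa using hgrad)

theorem blockEmbed_eq_single {m : ℕ} {F : Fin m → Type*} [∀ i, NormedAddCommGroup (F i)]
    (i : Fin m) (t : F i) : blockEmbed i t = PiLp.single 2 i t :=
  rfl

theorem apply_add_blockEmbed_le (L : Fin n → ℝ) {f : PiLp 2 E → ℝ} (hf : Differentiable ℝ f)
    (hLip : ∀ (x : PiLp 2 E) (i : Fin n) (t : E i),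
      ‖(gradient f (x + blockEmbed i t)) i - (gradient f x) i‖ ≤ L i * ‖t‖)
    (x : PiLp 2 E) (i : Fin n) (t : E i) :
    f (x + blockEmbed i t) ≤ f x + ⟪(gradient f x) i, t⟫ + L i / 2 * ‖t‖ ^ 2 := by
  have hgrad (s : ℝ) (hs : s ∈ Set.Ico (0 : ℝ) 1) :
      ⟪gradient f (x + s • PiLp.single 2 i t), PiLp.single 2 i t⟫ ≤
        ⟪gradient f x, PiLp.single 2 i t⟫ + L i * ‖t‖ ^ 2 * s := by
    have hstep := hLip x i (s • t)
    rw [blockEmbed_eq_single, PiLp.single_smul, norm_smul, Real.norm_of_nonneg hs.1] at hstep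
    simp only [PiLp.inner_single_right]
    calc ⟪(gradient f (x + s • PiLp.single 2 i t)) i, t⟫
        = ⟪(gradient f x) i, t⟫ +
            ⟪(gradient f (x + s • PiLp.single 2 i t)) i - (gradient f x) i, t⟫ := by
          rw [inner_sub_left]; ring
      _ ≤ ⟪(gradient f x) i, t⟫ + L i * (s * ‖t‖) * ‖t‖ := by
          gcongr
          exact (real_inner_le_norm _ _).trans (by gcongr)
      _ = ⟪(gradient f x) i, t⟫ + L i * ‖t‖ ^ 2 * s := by ring
  have hdescent := apply_add_le_of_inner_gradient_le hf x _ hgrad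
  rw [PiLp.inner_single_right] at hdescent
  rw [blockEmbed_eq_single]
  linarith

theorem ffun_add_blockEmbed_le (L : Fin n → ℝ) {f : PiLp 2 E → ℝ} (hf : Differentiable ℝ f)
    (hLip : ∀ (x : PiLp 2 E) (i : Fin n) (t : E i),
      ‖(gradient f (x + blockEmbed i t)) i - (gradient f x) i‖ ≤ L i * ‖t‖)
    (Ψ : ∀ i, E i → ℝ) (x : PiLp 2 E) (i : Fin n) (t : E i) :
    Ffun f Ψ (x + blockEmbed i t) ≤ Ffun f Ψ x + (Vi f L Ψ x i t - Vi f L Ψ x i 0) := by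
  have hf_le := apply_add_blockEmbed_le L hf hLip x i t
  simp only [Ffun, Vi, blockEmbed_eq_single, PiLp.sum_comp_add_single, inner_zero_right,
    norm_zero, add_zero] at hf_le ⊢
  linarith

theorem inexact_update_monotone_general
    (L : Fin n → ℝ)
    (f : PiLp 2 E → ℝ) (hfdiff : Differentiable ℝ f)
    (hLip : ∀ (x : PiLp 2 E) (i : Fin n) (t : E i),
      ‖(gradient f (x + blockEmbed i t)) i - (gradient f x) i‖ ≤ L i * ‖t‖)
    (Ψ : ∀ i, E i → ℝ)
    (x : PiLp 2 E) (δ : Fin n → ℝ)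
    (T : PiLp 2 E) (hT : IsInexactUpdate f L Ψ δ x T) (i : Fin n) :
    Ffun f Ψ (x + blockEmbed i (T i)) ≤ Ffun f Ψ x := by
  have hstep := ffun_add_blockEmbed_le L hfdiff hLip Ψ x i (T i)
  have hdecrease := (hT i).trans (min_le_left _ _)
  linarith

/-- Monotonicity of an inexact coordinate descent step:
`F(x + U_i T_i) ≤ F(x)` for any `δ`-inexact update `T` and any block `i`. -/
theorem inexact_update_monotone
    (hn : 0 < n)
    (L : Fin n → ℝ) (hL : ∀ i, 0 < L i)
    (f : PiLp 2 E → ℝ) (hfdiff : Differentiable ℝ f) (hfconv : ConvexOn ℝ Set.univ f)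
    (hLip : ∀ (x : PiLp 2 E) (i : Fin n) (t : E i),
      ‖(gradient f (x + blockEmbed i t)) i - (gradient f x) i‖ ≤ L i * ‖t‖)
    (Ψ : ∀ i, E i → ℝ) (hΨconv : ∀ i, ConvexOn ℝ Set.univ (Ψ i))
    (hΨcont : ∀ i, Continuous (Ψ i))
    (x : PiLp 2 E) (δ : Fin n → ℝ) (hδ : ∀ i, 0 ≤ δ i)
    (T : PiLp 2 E) (hT : IsInexactUpdate f L Ψ δ x T) (i : Fin n) :
    Ffun f Ψ (x + blockEmbed i (T i)) ≤ Ffun f Ψ x :=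
  inexact_update_monotone_general L f hfdiff hLip Ψ x δ T hT i
end
end

section
/- Assume in addition that f satisfies f(y) ≥ f(x) + ⟨∇f(x), y − x⟩ + (μ/2)‖y − x‖_L² for all x, y ∈ E, where μ ≥ 0. Then for every x ∈ E, every δ = (δ_1,…,δ_n) with δ_i ≥ 0, and every δ-inexact update T at x, with Δ = Σ_{i=1}^n δ_i, one has H(x, T) ≤ Δ + inf_{y ∈ E} { F(y) + ((1 − μ)/2)·‖y − x‖_L² }. -/
open scoped RealInnerProductSpace
open MeasureTheory

noncomputable section

variable {n : ℕ} {E : Fin n → Type*} [∀ i, NormedAddCommGroup (E i)]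
  [∀ i, InnerProductSpace ℝ (E i)] [∀ i, FiniteDimensional ℝ (E i)]

/-! Since `H(x,T) = f(x) + Σ_i V_i(x,T_i)`, summing `V_i(x,T_i) ≤ δ_i + V_i(x, y_i - x_i)` over the
blocks and bounding `f(x) + ⟨∇f(x), y - x⟩` by `f(y) - (μ/2)‖y - x‖_L²` gives the claim for every `y`.
The per-block inequality needs each `V_i(x,·)` to be bounded below, as otherwise the infimum in the
definition of an inexact update is Lean's junk value `0`: this holds because `Ψ_i`, being convex and
bounded on a compact ball, decreases at most linearly, while `(L_i/2)‖t‖²` grows quadratically. -/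

lemma ConvexOn.exists_neg_mul_one_add_norm_le {X : Type*} [NormedAddCommGroup X]
    [NormedSpace ℝ X] [ProperSpace X] {g : X → ℝ} (hconv : ConvexOn ℝ Set.univ g)
    (hcont : Continuous g) (x₀ : X) :
    ∃ C : ℝ, ∀ t : X, -C * (1 + ‖t‖) ≤ g (x₀ + t) := by
  obtain ⟨M, hM⟩ := (isCompact_closedBall x₀ 1).exists_bound_of_continuousOn hcont.continuousOn
  have hball : ∀ t : X, ‖t‖ ≤ 1 → |g (x₀ + t)| ≤ M := fun t ht =>
    hM _ (by simpa [dist_eq_norm] using ht)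
  have hx₀ : |g x₀| ≤ M := by simpa using hball 0 (by simp)
  refine ⟨2 * M, fun t => ?_⟩
  rcases le_or_gt ‖t‖ 1 with ht | ht
  · nlinarith [(abs_le.1 (hball t ht)).1, abs_nonneg (g x₀), norm_nonneg t]
  · set s := ‖t‖
    have hs : 0 < s := one_pos.trans ht
    -- Convexity on the segment from `x₀` to `x₀ + t`, at its point of distance 1 from `x₀`.
    have hseg := hconv.2 (Set.mem_univ x₀) (Set.mem_univ (x₀ + t))
      (sub_nonneg.2 (inv_le_one_of_one_le₀ ht.le)) (inv_nonneg.2 hs.le) (by ring)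
    have hpt : (1 - s⁻¹) • x₀ + s⁻¹ • (x₀ + t) = x₀ + s⁻¹ • t := by module
    rw [hpt, smul_eq_mul, smul_eq_mul] at hseg
    have hunit : ‖s⁻¹ • t‖ ≤ 1 := by
      rw [norm_smul, norm_inv, Real.norm_of_nonneg hs.le, inv_mul_cancel₀ hs.ne']
    have hscaled := mul_le_mul_of_nonneg_left hseg hs.le
    rw [mul_add, ← mul_assoc, ← mul_assoc, mul_sub, mul_inv_cancel₀ hs.ne', mul_one] at hscaled
    nlinarith [(abs_le.1 (hball _ hunit)).1, abs_le.1 hx₀]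

lemma Vi_bddBelow (f : PiLp 2 E → ℝ) (L : Fin n → ℝ) (Ψ : ∀ i, E i → ℝ)
    (x : PiLp 2 E) (i : Fin n) (hL : 0 < L i)
    (hconv : ConvexOn ℝ Set.univ (Ψ i)) (hcont : Continuous (Ψ i)) :
    BddBelow (Set.range (Vi f L Ψ x i)) := by
  obtain ⟨C, hC⟩ := hconv.exists_neg_mul_one_add_norm_le hcont (x i)
  set g := (gradient f x) i
  set b := ‖g‖ + C
  refine ⟨-C - b ^ 2 / (2 * L i), ?_⟩
  rintro _ ⟨t, rfl⟩
  have hinner : -(‖g‖ * ‖t‖) ≤ ⟪g, t⟫ := neg_le_of_abs_le (abs_real_inner_le_norm g t)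
  have hquad : -(b ^ 2 / (2 * L i)) ≤ L i / 2 * ‖t‖ ^ 2 - b * ‖t‖ := by
    have : L i / 2 * ‖t‖ ^ 2 - b * ‖t‖ + b ^ 2 / (2 * L i) = (L i * ‖t‖ - b) ^ 2 / (2 * L i) := by
      field_simp
      ring
    linarith [div_nonneg (sq_nonneg (L i * ‖t‖ - b)) (by positivity : (0 : ℝ) ≤ 2 * L i)]
  have := hC t
  simp only [Vi]
  linarith

lemma IsInexactUpdate.Vi_le {f : PiLp 2 E → ℝ} {L : Fin n → ℝ} {Ψ : ∀ i, E i → ℝ}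
    {δ : Fin n → ℝ} {x T : PiLp 2 E} (hT : IsInexactUpdate f L Ψ δ x T) {i : Fin n}
    (hbdd : BddBelow (Set.range (Vi f L Ψ x i))) (t : E i) :
    Vi f L Ψ x i (T i) ≤ δ i + Vi f L Ψ x i t :=
  (hT i).trans <| (min_le_right _ _).trans <| add_le_add_right (ciInf_le hbdd t) _

lemma sum_Vi (f : PiLp 2 E → ℝ) (L : Fin n → ℝ) (Ψ : ∀ i, E i → ℝ) (x t : PiLp 2 E) :
    ∑ i, Vi f L Ψ x i (t i) =
      ⟪gradient f x, t⟫ + (1/2) * ∑ i, L i * ‖t i‖ ^ 2 + ∑ i, Ψ i (x i + t i) := by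
  simp only [Vi, PiLp.inner_apply, Finset.mul_sum, ← Finset.sum_add_distrib]
  exact Finset.sum_congr rfl fun i _ => by ring

lemma Hfun_eq_add_sum_Vi (f : PiLp 2 E → ℝ) (L : Fin n → ℝ) (Ψ : ∀ i, E i → ℝ)
    (x T : PiLp 2 E) : Hfun f L Ψ x T = f x + ∑ i, Vi f L Ψ x i (T i) := by
  rw [sum_Vi, Hfun]
  ring

theorem Hfun_le_inf_general
    (L : Fin n → ℝ) (hL : ∀ i, 0 < L i)
    (f : PiLp 2 E → ℝ)
    (Ψ : ∀ i, E i → ℝ) (hΨconv : ∀ i, ConvexOn ℝ Set.univ (Ψ i))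
    (hΨcont : ∀ i, Continuous (Ψ i))
    (μ : ℝ)
    (hsc : ∀ x y : PiLp 2 E,
      f x + ⟪gradient f x, y - x⟫ + μ / 2 * ∑ i, L i * ‖y i - x i‖ ^ 2 ≤ f y)
    (x : PiLp 2 E) (δ : Fin n → ℝ)
    (T : PiLp 2 E) (hT : IsInexactUpdate f L Ψ δ x T) :
    Hfun f L Ψ x T ≤ (∑ i, δ i) +
      ⨅ y : PiLp 2 E, (Ffun f Ψ y + (1 - μ) / 2 * ∑ i, L i * ‖y i - x i‖ ^ 2) := by
  rw [← sub_le_iff_le_add']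
  refine le_ciInf fun y => sub_le_iff_le_add'.2 ?_
  have hblocks : ∑ i, Vi f L Ψ x i (T i) ≤ ∑ i, (δ i + Vi f L Ψ x i ((y - x) i)) :=
    Finset.sum_le_sum fun i _ =>
      hT.Vi_le (Vi_bddBelow f L Ψ x i (hL i) (hΨconv i) (hΨcont i)) _
  have hmodel := sum_Vi f L Ψ x (y - x)
  simp only [PiLp.sub_apply, add_sub_cancel] at hmodel hblocks
  rw [Finset.sum_add_distrib, hmodel] at hblocks
  rw [Hfun_eq_add_sum_Vi, Ffun]
  linarith [hsc x y]

/-- Upper bound on `H` at an inexact update under strong convexity of `f` (parameter `μ ≥ 0`)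
with respect to `‖·‖_L`:
`H(x,T) ≤ Δ + inf_y { F(y) + ((1−μ)/2)‖y − x‖_L² }`. -/
theorem Hfun_le_inf
    (hn : 0 < n)
    (L : Fin n → ℝ) (hL : ∀ i, 0 < L i)
    (f : PiLp 2 E → ℝ) (hfdiff : Differentiable ℝ f) (hfconv : ConvexOn ℝ Set.univ f)
    (hLip : ∀ (x : PiLp 2 E) (i : Fin n) (t : E i),
      ‖(gradient f (x + blockEmbed i t)) i - (gradient f x) i‖ ≤ L i * ‖t‖)
    (Ψ : ∀ i, E i → ℝ) (hΨconv : ∀ i, ConvexOn ℝ Set.univ (Ψ i))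
    (hΨcont : ∀ i, Continuous (Ψ i))
    (μ : ℝ) (hμ : 0 ≤ μ)
    (hsc : ∀ x y : PiLp 2 E,
      f x + ⟪gradient f x, y - x⟫ + μ / 2 * ∑ i, L i * ‖y i - x i‖ ^ 2 ≤ f y)
    (x : PiLp 2 E) (δ : Fin n → ℝ) (hδ : ∀ i, 0 ≤ δ i)
    (T : PiLp 2 E) (hT : IsInexactUpdate f L Ψ δ x T) :
    Hfun f L Ψ x T ≤ (∑ i, δ i) +
      ⨅ y : PiLp 2 E, (Ffun f Ψ y + (1 - μ) / 2 * ∑ i, L i * ‖y i - x i‖ ^ 2) :=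
  Hfun_le_inf_general L hL f Ψ hΨconv hΨcont μ hsc x δ T hT
end
end

section
/- Assume each E_i is nontrivial (has dimension at least 1), and suppose f additionally satisfies the strong convexity inequality f(y) ≥ f(x) + ⟨∇f(x), y − x⟩ + (μ/2)‖y − x‖_L² for all x, y ∈ E, for some μ ≥ 0. Then μ ≤ 1. -/
open scoped RealInnerProductSpace
open MeasureTheory

noncomputable section

variable {n : ℕ} {E : Fin n → Type*} [∀ i, NormedAddCommGroup (E i)]
  [∀ i, InnerProductSpace ℝ (E i)] [∀ i, FiniteDimensional ℝ (E i)]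

/-!
The block Lipschitz bound gives, by integrating the derivative along the segment, the block
descent lemma `f (x + Uᵢ t) ≤ f x + ⟪∇ᵢ f x, t⟫ + Lᵢ/2 ‖t‖²`, while strong convexity applied to
the same pair of points gives the lower bound `f x + ⟪∇ᵢ f x, t⟫ + μ/2 · Lᵢ ‖t‖²`.
For `t ≠ 0` comparing the two yields `μ ≤ 1`.
-/

section LineDescent

variable {F : Type*} [NormedAddCommGroup F] [InnerProductSpace ℝ F] [CompleteSpace F]
  {f : F → ℝ}

theorem hasDerivAt_comp_add_smul (hf : Differentiable ℝ f) (x v : F) (s : ℝ) :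
    HasDerivAt (fun s : ℝ => f (x + s • v)) ⟪gradient f (x + s • v), v⟫ s := by
  have hline : HasDerivAt (fun s : ℝ => x + s • v) v s := by
    simpa using ((hasDerivAt_id s).smul_const v).const_add x
  have := (hf (x + s • v)).hasGradientAt.hasFDerivAt.comp_hasDerivAt s hline
  rwa [InnerProductSpace.toDual_apply_apply] at this

theorem le_add_inner_gradient_add_of_inner_gradient_sub_le (hf : Differentiable ℝ f)
    (x v : F) (K : ℝ)
    (hK : ∀ s ∈ Set.Ioo (0 : ℝ) 1, ⟪gradient f (x + s • v) - gradient f x, v⟫ ≤ K * s) :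
    f (x + v) ≤ f x + ⟪gradient f x, v⟫ + K / 2 := by
  set φ : ℝ → ℝ := fun s => f (x + s • v) - s * ⟪gradient f x, v⟫ - K / 2 * s ^ 2
  have hφ : ∀ s, HasDerivAt φ (⟪gradient f (x + s • v), v⟫ - ⟪gradient f x, v⟫ - K * s) s := by
    intro s
    refine (((hasDerivAt_comp_add_smul hf x v s).sub ((hasDerivAt_id' s).mul_const _)).sub
      ((hasDerivAt_pow 2 s).const_mul (K / 2))).congr_deriv ?_
    norm_num
    ring
  have hanti : AntitoneOn φ (Set.Icc 0 1) := by
    refine antitoneOn_of_hasDerivWithinAt_nonpos (convex_Icc 0 1)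
      (fun s _ => (hφ s).continuousAt.continuousWithinAt)
      (fun s _ => (hφ s).hasDerivWithinAt) fun s hs => ?_
    rw [interior_Icc] at hs
    have := hK s hs
    rw [inner_sub_left] at this
    linarith
  have := hanti (Set.left_mem_Icc.2 zero_le_one) (Set.right_mem_Icc.2 zero_le_one) zero_le_one
  simp only [φ, one_smul, zero_smul, add_zero] at this
  linarith

end LineDescent

section Blocks

omit [∀ i, FiniteDimensional ℝ (E i)]

theorem blockEmbed_smul (i : Fin n) (s : ℝ) (t : E i) :
    blockEmbed i (s • t) = s • blockEmbed i t := by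
  ext j
  simp [blockEmbed, Pi.single_smul]

theorem inner_blockEmbed_right (g : PiLp 2 E) (i : Fin n) (t : E i) :
    ⟪g, blockEmbed i t⟫ = ⟪g i, t⟫ := by
  rw [PiLp.inner_apply, Finset.sum_eq_single i]
  · simp [blockEmbed]
  · intro j _ hj
    simp [blockEmbed, Pi.single_eq_of_ne hj]
  · simp

omit [∀ i, InnerProductSpace ℝ (E i)] in
theorem sum_mul_norm_blockEmbed_sq (w : Fin n → ℝ) (i : Fin n) (t : E i) :
    ∑ j, w j * ‖blockEmbed i t j‖ ^ 2 = w i * ‖t‖ ^ 2 := by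
  rw [Finset.sum_eq_single i]
  · simp [blockEmbed]
  · intro j _ hj
    simp [blockEmbed, Pi.single_eq_of_ne hj]
  · simp

end Blocks

theorem le_add_inner_gradient_blockEmbed {f : PiLp 2 E → ℝ} (hf : Differentiable ℝ f)
    (x : PiLp 2 E) (i : Fin n) {K : ℝ}
    (hK : ∀ t : E i, ‖gradient f (x + blockEmbed i t) i - gradient f x i‖ ≤ K * ‖t‖)
    (t : E i) :
    f (x + blockEmbed i t) ≤ f x + ⟪gradient f x i, t⟫ + K / 2 * ‖t‖ ^ 2 := by
  rw [← inner_blockEmbed_right, div_mul_eq_mul_div]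
  refine le_add_inner_gradient_add_of_inner_gradient_sub_le hf x _ _ fun s hs => ?_
  rw [← blockEmbed_smul, inner_blockEmbed_right]
  calc ⟪gradient f (x + blockEmbed i (s • t)) i - gradient f x i, t⟫
      ≤ ‖gradient f (x + blockEmbed i (s • t)) i - gradient f x i‖ * ‖t‖ :=
        real_inner_le_norm _ _
    _ ≤ K * ‖s • t‖ * ‖t‖ := by gcongr; exact hK _
    _ = K * ‖t‖ ^ 2 * s := by
        rw [norm_smul, Real.norm_of_nonneg hs.1.le]; ring

theorem strong_convexity_parameter_le_one_general
    [∀ i, Nontrivial (E i)]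
    (hn : 0 < n)
    (L : Fin n → ℝ) (hL : ∀ i, 0 < L i)
    (f : PiLp 2 E → ℝ) (hfdiff : Differentiable ℝ f)
    (hLip : ∀ (x : PiLp 2 E) (i : Fin n) (t : E i),
      ‖(gradient f (x + blockEmbed i t)) i - (gradient f x) i‖ ≤ L i * ‖t‖)
    (μ : ℝ)
    (hsc : ∀ x y : PiLp 2 E,
      f x + ⟪gradient f x, y - x⟫ + μ / 2 * ∑ i, L i * ‖y i - x i‖ ^ 2 ≤ f y) :
    μ ≤ 1 := by
  let i : Fin n := ⟨0, hn⟩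
  obtain ⟨t, ht⟩ : ∃ t : E i, t ≠ 0 := exists_ne 0
  have hupper := le_add_inner_gradient_blockEmbed hfdiff 0 i (hLip 0 i) t
  have hlower := hsc 0 (blockEmbed i t)
  simp only [sub_zero, PiLp.zero_apply, zero_add, inner_blockEmbed_right,
    sum_mul_norm_blockEmbed_sq] at hupper hlower
  have hpos : 0 < L i * ‖t‖ ^ 2 := mul_pos (hL i) (by positivity)
  exact le_of_mul_le_mul_right (by linarith) hpos

/-- The strong convexity parameter of `f` with respect to `‖·‖_L` is at most `1`:
if each `Eᵢ` is nontrivial and `f` is `μ`-strongly convex w.r.t. `‖·‖_L`, then `μ ≤ 1`. -/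
theorem strong_convexity_parameter_le_one
    [∀ i, Nontrivial (E i)]
    (hn : 0 < n)
    (L : Fin n → ℝ) (hL : ∀ i, 0 < L i)
    (f : PiLp 2 E → ℝ) (hfdiff : Differentiable ℝ f) (hfconv : ConvexOn ℝ Set.univ f)
    (hLip : ∀ (x : PiLp 2 E) (i : Fin n) (t : E i),
      ‖(gradient f (x + blockEmbed i t)) i - (gradient f x) i‖ ≤ L i * ‖t‖)
    (μ : ℝ) (hμ : 0 ≤ μ)
    (hsc : ∀ x y : PiLp 2 E,
      f x + ⟪gradient f x, y - x⟫ + μ / 2 * ∑ i, L i * ‖y i - x i‖ ^ 2 ≤ f y) :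
    μ ≤ 1 :=
  strong_convexity_parameter_le_one_general hn L hL f hfdiff hLip μ hsc
end
end
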